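/- For every α ≥ 0, every n ∈ ℕ with n ≥ 1, every k ∈ ℕ, all λ₁, …, λ_k ≥ 0, and every polynomial P ∈ P_n, ‖P'‖_{W^{k,2}(ℝ; w,λ₁w,…,λ_kw)} ≤ √(2n) · ‖P‖_{W^{k,2}(ℝ; w,λ₁w,…,λ_kw)}, where w(x) = |x|^α e^{−x²} on ℝ. -/

import Mathlib

open MeasureTheory Polynomial

/-- The weighted L² norm of a polynomial `P` over a set `A ⊆ ℝ` with weight `w`:
`‖P‖_{L²(A,w)} = (∫_A |P(x)|² w(x) dx)^{1/2}`. -/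
noncomputable def L2w (A : Set ℝ) (w : ℝ → ℝ) (P : Polynomial ℝ) : ℝ :=
  Real.sqrt (∫ x in A, (P.eval x) ^ 2 * w x)

/-- The weighted Sobolev norm
`‖P‖_{W^{k,2}(A; w, λ₁w, …, λ_k w)} = (‖P‖²_{L²(A,w)} + ∑_{j=1}^k λ_j ‖P^{(j)}‖²_{L²(A,w)})^{1/2}`. -/
noncomputable def sobNorm (A : Set ℝ) (w : ℝ → ℝ) (k : ℕ) (lam : ℕ → ℝ)
    (P : Polynomial ℝ) : ℝ :=
  Real.sqrt ((L2w A w P) ^ 2 +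
    ∑ j ∈ Finset.Icc 1 k, lam j * (L2w A w (derivative^[j] P)) ^ 2)

/-!
Write `Q = u(x²) + x v(x²)`. The weight is even, so the odd parts of `Q²` and `Q'²` integrate to
zero, and `t = x²` turns `∫ Q² w` and `∫ Q'² w` into `∫ (u² + t v²)` and
`∫ (4 t u'² + (v + 2 t v')²)` against the Laguerre weight `t ^ β e⁻ᵗ`, `β = (α - 1) / 2`.
For that weight the Laguerre operator `A u = -(t u'' + (β + 1 - t) u')` is symmetric,
`∫ (A u) v = ∫ t u' v'`, and its degree-`m` eigenpolynomial (eigenvalue `m`) is orthogonal to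
lower degrees; splitting off its multiple by induction on the degree gives
`∫ t u'² ≤ (deg u) ∫ u²`. One integration by parts reduces the odd part to the same bound for the
weight `t ^ (β + 1) e⁻ᵗ`, the leftover term `-(2β + 1) ∫ v² = -α ∫ v²` being nonpositive.
Every derivative of `P` has degree `≤ n`, so the Sobolev norm inherits the bound term by term.
-/

open Set

namespace Polynomial

variable {R : Type*}

lemma coeff_X_mul_derivative [Semiring R] (q : R[X]) (k : ℕ) :
    (X * derivative q).coeff k = q.coeff k * k := by
  cases k with
  | zero => simp
  | succ k => rw [coeff_X_mul, coeff_derivative]; push_cast; rfl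

variable [CommSemiring R]

lemma natDegree_contract_le {p : ℕ} (hp : p ≠ 0) (f : R[X]) :
    (contract p f).natDegree ≤ f.natDegree / p :=
  natDegree_le_iff_coeff_eq_zero.2 fun N hN => by
    rw [coeff_contract hp]
    exact coeff_eq_zero_of_natDegree_lt ((Nat.div_lt_iff_lt_mul (Nat.pos_of_ne_zero hp)).1 hN)

lemma expand_contract_add_X_mul_expand_contract_divX (f : R[X]) :
    expand R 2 (contract 2 f) + X * expand R 2 (contract 2 (divX f)) = f := by
  ext k
  rw [coeff_add]
  rcases Nat.even_or_odd' k with ⟨d, rfl | rfl⟩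
  · rw [mul_comm 2 d, coeff_expand_mul two_pos, coeff_contract two_ne_zero]
    cases d with
    | zero => simp
    | succ d =>
      rw [show (d + 1) * 2 = (2 * d + 1) + 1 by ring, coeff_X_mul, coeff_expand two_pos,
        if_neg (by omega), add_zero]
  · rw [coeff_X_mul, coeff_expand two_pos, if_neg (by omega), mul_comm 2 d,
      coeff_expand_mul two_pos, coeff_contract two_ne_zero, coeff_divX, zero_add]

end Polynomial

noncomputable def laguerreMoment (γ : ℝ) (q : ℝ[X]) : ℝ :=
  ∫ t in Ioi (0 : ℝ), q.eval t * (t ^ γ * Real.exp (-t))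

section Laguerre

variable {γ : ℝ}

lemma integrableOn_laguerreMoment (hγ : -1 < γ) (q : ℝ[X]) :
    IntegrableOn (fun t => q.eval t * (t ^ γ * Real.exp (-t))) (Ioi 0) := by
  induction q using Polynomial.induction_on' with
  | add p q hp hq => simp only [eval_add, add_mul]; exact hp.add hq
  | monomial n a =>
    have hs : 0 < γ + n + 1 := by linarith [n.cast_nonneg (α := ℝ)]
    refine IntegrableOn.congr_fun ((Real.GammaIntegral_convergent hs).const_mul a)
      (fun t (ht : 0 < t) => ?_) measurableSet_Ioi
    rw [eval_monomial, add_sub_cancel_right, Real.rpow_add ht, Real.rpow_natCast]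
    ring

lemma laguerreMoment_monomial (hγ : -1 < γ) (n : ℕ) (a : ℝ) :
    laguerreMoment γ (monomial n a) = a * Real.Gamma (γ + n + 1) := by
  rw [laguerreMoment, Real.Gamma_eq_integral (by linarith [n.cast_nonneg (α := ℝ)]),
    ← integral_const_mul]
  refine setIntegral_congr_fun measurableSet_Ioi fun t (ht : 0 < t) => ?_
  rw [eval_monomial, add_sub_cancel_right, Real.rpow_add ht, Real.rpow_natCast]
  ring

lemma laguerreMoment_add (hγ : -1 < γ) (p q : ℝ[X]) :
    laguerreMoment γ (p + q) = laguerreMoment γ p + laguerreMoment γ q := by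
  rw [laguerreMoment, laguerreMoment, laguerreMoment,
    ← integral_add (integrableOn_laguerreMoment hγ p) (integrableOn_laguerreMoment hγ q)]
  simp only [eval_add, add_mul]

lemma laguerreMoment_sub (hγ : -1 < γ) (p q : ℝ[X]) :
    laguerreMoment γ (p - q) = laguerreMoment γ p - laguerreMoment γ q := by
  rw [eq_sub_iff_add_eq, ← laguerreMoment_add hγ, sub_add_cancel]

lemma laguerreMoment_C_mul (c : ℝ) (q : ℝ[X]) :
    laguerreMoment γ (C c * q) = c * laguerreMoment γ q := by
  rw [laguerreMoment, laguerreMoment, ← integral_const_mul]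
  simp only [eval_mul, eval_C, mul_assoc]

lemma laguerreMoment_smul (c : ℝ) (q : ℝ[X]) :
    laguerreMoment γ (c • q) = c * laguerreMoment γ q := by
  rw [smul_eq_C_mul, laguerreMoment_C_mul]

lemma laguerreMoment_sq_nonneg (γ : ℝ) (q : ℝ[X]) : 0 ≤ laguerreMoment γ (q ^ 2) :=
  setIntegral_nonneg measurableSet_Ioi fun t (ht : 0 < t) => by rw [eval_pow]; positivity

lemma laguerreMoment_X_mul (q : ℝ[X]) : laguerreMoment γ (X * q) = laguerreMoment (γ + 1) q := by
  refine setIntegral_congr_fun measurableSet_Ioi fun t (ht : 0 < t) => ?_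
  rw [eval_mul, eval_X, Real.rpow_add ht, Real.rpow_one]
  ring

lemma laguerreMoment_X_mul_derivative (hγ : -1 < γ) (r : ℝ[X]) :
    laguerreMoment γ (X * derivative r) =
      laguerreMoment γ (X * r) - (γ + 1) * laguerreMoment γ r := by
  induction r using Polynomial.induction_on' with
  | add p q hp hq =>
    simp only [derivative_add, mul_add, laguerreMoment_add hγ, hp, hq]
    ring
  | monomial k a =>
    have hXd : X * derivative (monomial k a) = monomial k (a * k) := by
      ext i
      rw [coeff_X_mul_derivative, coeff_monomial, coeff_monomial]
      split_ifs with h <;> simp [h]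
    rw [hXd, X_mul_monomial, laguerreMoment_monomial hγ, laguerreMoment_monomial hγ,
      laguerreMoment_monomial hγ,
      show γ + ((k + 1 : ℕ) : ℝ) + 1 = (γ + k + 1) + 1 by push_cast; ring,
      Real.Gamma_add_one (s := γ + k + 1) (by linarith [k.cast_nonneg (α := ℝ)])]
    ring

end Laguerre

noncomputable def laguerreOp (γ : ℝ) (q : ℝ[X]) : ℝ[X] :=
  X * derivative q - X * derivative (derivative q) - C (γ + 1) * derivative q

section LaguerreOp

variable {γ : ℝ}

lemma coeff_laguerreOp (γ : ℝ) (q : ℝ[X]) (k : ℕ) :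
    (laguerreOp γ q).coeff k = k * q.coeff k - (k + 1) * (k + 1 + γ) * q.coeff (k + 1) := by
  rw [laguerreOp, coeff_sub, coeff_sub, coeff_X_mul_derivative, coeff_X_mul_derivative,
    coeff_derivative, coeff_C_mul, coeff_derivative]
  ring

lemma laguerreMoment_X_mul_derivative_mul_derivative (hγ : -1 < γ) (u v : ℝ[X]) :
    laguerreMoment γ (X * derivative u * derivative v) = laguerreMoment γ (laguerreOp γ u * v) := by
  have hibp := laguerreMoment_X_mul_derivative hγ (derivative u * v)
  rw [derivative_mul, mul_add, laguerreMoment_add hγ] at hibp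
  have hA : laguerreOp γ u * v = X * (derivative u * v) - X * (derivative (derivative u) * v) -
      C (γ + 1) * (derivative u * v) := by
    rw [laguerreOp]; ring
  rw [hA, laguerreMoment_sub hγ, laguerreMoment_sub hγ, laguerreMoment_C_mul, mul_assoc]
  linarith

lemma laguerreMoment_laguerreOp_mul_comm (hγ : -1 < γ) (u v : ℝ[X]) :
    laguerreMoment γ (laguerreOp γ u * v) = laguerreMoment γ (u * laguerreOp γ v) := by
  rw [← laguerreMoment_X_mul_derivative_mul_derivative hγ, mul_comm u,
    ← laguerreMoment_X_mul_derivative_mul_derivative hγ, mul_right_comm]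

/-- The recursion is `coeff_laguerreOp` solved for an eigenvector with eigenvalue `m`; it gives
`laguerreCoeff γ m (m + 1) = 0`, hence all higher coefficients vanish. -/
noncomputable def laguerreCoeff (γ : ℝ) (m : ℕ) : ℕ → ℝ
  | 0 => 1
  | k + 1 => (k - m) * laguerreCoeff γ m k / ((k + 1) * (k + 1 + γ))

noncomputable def laguerrePoly (γ : ℝ) (m : ℕ) : ℝ[X] :=
  ∑ k ∈ Finset.range (m + 1), monomial k (laguerreCoeff γ m k)

lemma laguerreCoeff_ne_zero (hγ : -1 < γ) {m k : ℕ} (hk : k ≤ m) : laguerreCoeff γ m k ≠ 0 := by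
  induction k with
  | zero => exact one_ne_zero
  | succ k ih =>
    have hkm : (k : ℝ) < m := by exact_mod_cast hk
    have hk0 : (0 : ℝ) ≤ k := k.cast_nonneg
    rw [laguerreCoeff]
    have hden : (0 : ℝ) < k + 1 + γ := by linarith
    exact div_ne_zero (mul_ne_zero (by linarith) (ih (by omega))) (by positivity)

lemma laguerreCoeff_eq_zero {m k : ℕ} (hk : m < k) : laguerreCoeff γ m k = 0 := by
  induction k with
  | zero => omega
  | succ k ih =>
    rw [laguerreCoeff]
    rcases (Nat.lt_succ_iff.1 hk).eq_or_lt with rfl | hlt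
    · simp
    · simp [ih hlt]

lemma coeff_laguerrePoly (γ : ℝ) (m k : ℕ) : (laguerrePoly γ m).coeff k = laguerreCoeff γ m k := by
  rw [laguerrePoly, finsetSum_coeff]
  simp only [coeff_monomial, Finset.sum_ite_eq', Finset.mem_range]
  split_ifs with hk
  · rfl
  · exact (laguerreCoeff_eq_zero (by omega)).symm

lemma natDegree_laguerrePoly (hγ : -1 < γ) (m : ℕ) : (laguerrePoly γ m).natDegree = m :=
  natDegree_eq_of_le_of_coeff_ne_zero
    (natDegree_le_iff_coeff_eq_zero.2 fun _ hk => by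
      rw [coeff_laguerrePoly, laguerreCoeff_eq_zero (by exact_mod_cast hk)])
    (by rw [coeff_laguerrePoly]; exact laguerreCoeff_ne_zero hγ le_rfl)

lemma laguerreOp_laguerrePoly (hγ : -1 < γ) (m : ℕ) :
    laguerreOp γ (laguerrePoly γ m) = (m : ℝ) • laguerrePoly γ m := by
  ext k
  have hk : (0 : ℝ) < (k + 1) * (k + 1 + γ) := by
    have := k.cast_nonneg (α := ℝ); nlinarith
  rw [coeff_laguerreOp, coeff_smul, coeff_laguerrePoly, coeff_laguerrePoly, laguerreCoeff,
    smul_eq_mul, mul_div_cancel₀ _ hk.ne']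
  ring

/-- On `degree q < j` the operator `laguerreOp γ` is `j` modulo polynomials of degree `< j`, while
it acts on `laguerrePoly γ m` by `m`; induct on `j`. -/
lemma laguerreMoment_laguerrePoly_mul_eq_zero (hγ : -1 < γ) {m : ℕ} {q : ℝ[X]}
    (hq : q.degree < m) : laguerreMoment γ (laguerrePoly γ m * q) = 0 := by
  suffices h : ∀ j ≤ m, ∀ q : ℝ[X], q.degree < j → laguerreMoment γ (laguerrePoly γ m * q) = 0 from
    h m le_rfl q hq
  intro j
  induction j with
  | zero =>
    intro _ q hq
    rw [degree_lt_iff_coeff_zero] at hq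
    rw [show q = 0 from ext fun k => hq k k.zero_le, mul_zero]
    simp [laguerreMoment]
  | succ j ih =>
    intro hj q hq
    rw [degree_lt_iff_coeff_zero] at hq
    set r := laguerreOp γ q - (j : ℝ) • q
    have hr : r.degree < j := by
      refine (degree_lt_iff_coeff_zero _ _).2 fun k hk => ?_
      rw [coeff_sub, coeff_laguerreOp, coeff_smul, hq (k + 1) (by omega), smul_eq_mul]
      rcases hk.eq_or_lt with rfl | hlt
      · ring
      · rw [hq k hlt]; ring
    have heig : (m : ℝ) * laguerreMoment γ (laguerrePoly γ m * q) =
        j * laguerreMoment γ (laguerrePoly γ m * q) := by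
      rw [← laguerreMoment_smul, ← smul_mul_assoc, ← laguerreOp_laguerrePoly hγ,
        laguerreMoment_laguerreOp_mul_comm hγ, show laguerreOp γ q = (j : ℝ) • q + r by
          rw [add_sub_cancel], mul_add, laguerreMoment_add hγ, ih (by omega) r hr, add_zero,
        mul_smul_comm, laguerreMoment_smul]
    have hmj : (m : ℝ) - j ≠ 0 := sub_ne_zero.2 (by exact_mod_cast (by omega : m ≠ j))
    exact (mul_eq_zero.1 (by rw [sub_mul, heig, sub_self] :
      ((m : ℝ) - j) * laguerreMoment γ (laguerrePoly γ m * q) = 0)).resolve_left hmj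

end LaguerreOp

section LaguerreMarkov

variable {γ : ℝ}

theorem laguerreMoment_X_mul_derivative_sq_le (hγ : -1 < γ) {m : ℕ} {u : ℝ[X]}
    (hu : u.natDegree ≤ m) :
    laguerreMoment γ (X * derivative u ^ 2) ≤ m * laguerreMoment γ (u ^ 2) := by
  induction m generalizing u with
  | zero =>
    rw [eq_C_of_natDegree_le_zero hu]
    simp [laguerreMoment]
  | succ m ih =>
    set p := laguerrePoly γ (m + 1)
    have hp : p.coeff (m + 1) ≠ 0 := by
      rw [coeff_laguerrePoly]; exact laguerreCoeff_ne_zero hγ le_rfl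
    set e := u.coeff (m + 1) / p.coeff (m + 1)
    set v := u - C e * p
    have hv : v.natDegree ≤ m := natDegree_le_iff_coeff_eq_zero.2 fun k hk => by
      rw [coeff_sub, coeff_C_mul]
      rcases (Nat.succ_le_of_lt hk).eq_or_lt with rfl | hlt
      · rw [div_mul_cancel₀ _ hp, sub_self]
      · rw [coeff_eq_zero_of_natDegree_lt (hu.trans_lt hlt), coeff_eq_zero_of_natDegree_lt
          ((natDegree_laguerrePoly hγ _).trans_lt hlt), mul_zero, sub_zero]
    have hpv : laguerreMoment γ (p * v) = 0 :=
      laguerreMoment_laguerrePoly_mul_eq_zero hγ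
        (degree_le_natDegree.trans_lt (by exact_mod_cast Nat.lt_succ_of_le hv))
    have hform : ∀ q, laguerreMoment γ (X * derivative p * derivative q) =
        (m + 1) * laguerreMoment γ (p * q) := fun q => by
      rw [laguerreMoment_X_mul_derivative_mul_derivative hγ, laguerreOp_laguerrePoly hγ,
        smul_mul_assoc, laguerreMoment_smul, Nat.cast_succ]
    have hu2 : laguerreMoment γ (u ^ 2) =
        laguerreMoment γ (v ^ 2) + e ^ 2 * laguerreMoment γ (p ^ 2) := by
      rw [show u ^ 2 = v ^ 2 + C (2 * e) * (p * v) + C (e ^ 2) * p ^ 2 by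
        simp only [v, C_mul, C_pow, map_ofNat]; ring,
        laguerreMoment_add hγ, laguerreMoment_add hγ, laguerreMoment_C_mul, laguerreMoment_C_mul,
        hpv, mul_zero, add_zero]
    have hu'2 : laguerreMoment γ (X * derivative u ^ 2) =
        laguerreMoment γ (X * derivative v ^ 2) + e ^ 2 * ((m + 1) * laguerreMoment γ (p ^ 2)) := by
      rw [show X * derivative u ^ 2 = X * derivative v ^ 2 +
          C (2 * e) * (X * derivative p * derivative v) +
          C (e ^ 2) * (X * derivative p * derivative p) by
          simp only [v, derivative_sub, derivative_C_mul, C_mul, C_pow, map_ofNat]; ring,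
        laguerreMoment_add hγ, laguerreMoment_add hγ, laguerreMoment_C_mul, laguerreMoment_C_mul,
        hform, hform, hpv, ← sq]
      ring
    rw [hu2, hu'2, Nat.cast_succ]
    nlinarith [ih hv, laguerreMoment_sq_nonneg γ v, laguerreMoment_sq_nonneg γ p, sq_nonneg e]

theorem laguerreMoment_add_two_X_mul_derivative_sq_le (hγ : -1 / 2 ≤ γ) (v : ℝ[X]) :
    laguerreMoment γ ((v + 2 * X * derivative v) ^ 2) ≤
      (4 * v.natDegree + 2) * laguerreMoment γ (X * v ^ 2) := by
  have hγ' : -1 < γ := by linarith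
  have hexp : (v + 2 * X * derivative v) ^ 2 =
      v ^ 2 + C 2 * (X * derivative (v ^ 2)) + C 4 * (X * (X * derivative v ^ 2)) := by
    rw [derivative_sq]; simp only [map_ofNat]; ring
  have hmarkov : laguerreMoment γ (X * (X * derivative v ^ 2)) ≤
      v.natDegree * laguerreMoment γ (X * v ^ 2) := by
    rw [laguerreMoment_X_mul (X * _), laguerreMoment_X_mul (v ^ 2)]
    exact laguerreMoment_X_mul_derivative_sq_le (by linarith) le_rfl
  rw [hexp, laguerreMoment_add hγ', laguerreMoment_add hγ', laguerreMoment_C_mul,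
    laguerreMoment_C_mul, laguerreMoment_X_mul_derivative hγ']
  have hpos := mul_nonneg (by linarith : 0 ≤ 2 * γ + 1) (laguerreMoment_sq_nonneg γ v)
  linarith

end LaguerreMarkov

noncomputable def hermiteMoment (α : ℝ) (q : ℝ[X]) : ℝ :=
  ∫ x : ℝ, q.eval x * (|x| ^ α * Real.exp (-x ^ 2))

section Hermite

variable {α : ℝ}

lemma integrable_abs_rpow_mul_exp_neg_sq {s : ℝ} (hs : -1 < s) :
    Integrable fun x : ℝ => |x| ^ s * Real.exp (-x ^ 2) := by
  have hIoi : IntegrableOn (fun x : ℝ => |x| ^ s * Real.exp (-x ^ 2)) (Ioi 0) := by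
    refine (integrableOn_rpow_mul_exp_neg_mul_sq one_pos hs).congr_fun (fun x (hx : 0 < x) => ?_)
      measurableSet_Ioi
    simp only [abs_of_pos hx, neg_one_mul]
  rw [← integrableOn_univ, ← Iic_union_Ioi (a := (0 : ℝ)), integrableOn_union]
  refine ⟨?_, hIoi⟩
  have hneg : MeasurableEmbedding fun x : ℝ => -x := (Homeomorph.neg ℝ).measurableEmbedding
  rw [← Measure.map_neg_eq_self (volume : Measure ℝ), hneg.integrableOn_map_iff]
  simp only [Function.comp_def, abs_neg, neg_sq, neg_preimage, neg_Iic, neg_zero]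
  exact (integrableOn_Ici_iff_integrableOn_Ioi).mpr hIoi

lemma integrable_hermiteMoment (hα : -1 < α) (q : ℝ[X]) :
    Integrable fun x : ℝ => q.eval x * (|x| ^ α * Real.exp (-x ^ 2)) := by
  induction q using Polynomial.induction_on' with
  | add p q hp hq => simp only [eval_add, add_mul]; exact hp.add hq
  | monomial n a =>
    refine ((integrable_abs_rpow_mul_exp_neg_sq (s := α + n)
      (by linarith [n.cast_nonneg (α := ℝ)])).const_mul |a|).mono' (by fun_prop) ?_
    filter_upwards [Measure.ae_ne volume 0] with x (hx : x ≠ 0)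
    rw [Real.norm_eq_abs, eval_monomial, abs_mul, abs_mul, abs_pow,
      abs_of_nonneg (by positivity : 0 ≤ |x| ^ α * Real.exp (-x ^ 2)),
      Real.rpow_add (abs_pos.2 hx), Real.rpow_natCast]
    exact le_of_eq (by ring)

lemma hermiteMoment_add (hα : -1 < α) (p q : ℝ[X]) :
    hermiteMoment α (p + q) = hermiteMoment α p + hermiteMoment α q := by
  rw [hermiteMoment, hermiteMoment, hermiteMoment,
    ← integral_add (integrable_hermiteMoment hα p) (integrable_hermiteMoment hα q)]
  simp only [eval_add, add_mul]

lemma hermiteMoment_sq_nonneg (α : ℝ) (q : ℝ[X]) : 0 ≤ hermiteMoment α (q ^ 2) :=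
  integral_nonneg fun x => by rw [eval_pow]; positivity

lemma hermiteMoment_X_mul_expand (α : ℝ) (q : ℝ[X]) : hermiteMoment α (X * expand ℝ 2 q) = 0 := by
  have hodd : hermiteMoment α (X * expand ℝ 2 q) = -hermiteMoment α (X * expand ℝ 2 q) := by
    rw [hermiteMoment]
    nth_rewrite 1 [← integral_neg_eq_self]
    rw [← integral_neg]
    congr 1 with x
    simp only [eval_mul, eval_X, expand_eval, neg_sq, abs_neg]
    ring
  linarith

/-- Substituting `t = x ^ 2` turns `|x| ^ α * exp (-x ^ 2) dx` on `ℝ` into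
`t ^ ((α - 1) / 2) * exp (-t) dt` on `(0, ∞)`. -/
lemma hermiteMoment_expand (hα : -1 < α) (q : ℝ[X]) :
    hermiteMoment α (expand ℝ 2 q) = laguerreMoment ((α - 1) / 2) q := by
  have hβ : -1 < (α - 1) / 2 := by linarith
  induction q using Polynomial.induction_on' with
  | add p q hp hq => rw [map_add, hermiteMoment_add hα, laguerreMoment_add hβ, hp, hq]
  | monomial d a =>
    have hd : 0 ≤ (d : ℝ) := d.cast_nonneg
    have hcomp : hermiteMoment α (monomial (2 * d) a) =
        ∫ x : ℝ, a * (fun t : ℝ => t ^ (α + 2 * d) * Real.exp (-t ^ 2)) |x| := by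
      refine integral_congr_ae ?_
      filter_upwards [Measure.ae_ne volume 0] with x (hx : x ≠ 0)
      have hpow : |x| ^ (2 * (d : ℝ)) = x ^ (2 * d) := by
        rw [show 2 * (d : ℝ) = ((2 * d : ℕ) : ℝ) by push_cast; ring, Real.rpow_natCast, pow_abs,
          abs_of_nonneg (Even.pow_nonneg ⟨d, by ring⟩ x)]
      rw [eval_monomial, sq_abs, Real.rpow_add (abs_pos.2 hx), hpow]
      ring
    rw [expand_monomial, mul_comm d, hcomp, integral_const_mul, integral_comp_abs
      (f := fun t : ℝ => t ^ (α + 2 * d) * Real.exp (-t ^ 2)),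
      laguerreMoment_monomial hβ]
    have hIoi : ∫ t in Ioi (0 : ℝ), t ^ (α + 2 * d) * Real.exp (-t ^ 2) =
        1 / 2 * Real.Gamma ((α - 1) / 2 + d + 1) := by
      rw [show (α - 1) / 2 + d + 1 = (α + 2 * d + 1) / 2 by ring,
        ← integral_rpow_mul_exp_neg_rpow two_pos (by linarith)]
      refine setIntegral_congr_fun measurableSet_Ioi fun t _ => ?_
      rw [← Real.rpow_natCast t 2, Nat.cast_ofNat]
    rw [hIoi]
    ring

lemma hermiteMoment_expand_add_X_mul_expand (hα : -1 < α) (a b : ℝ[X]) :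
    hermiteMoment α (expand ℝ 2 a + X * expand ℝ 2 b) = laguerreMoment ((α - 1) / 2) a := by
  rw [hermiteMoment_add hα, hermiteMoment_X_mul_expand, add_zero, hermiteMoment_expand hα]

theorem hermiteMoment_derivative_sq_le (hα : 0 ≤ α) {n : ℕ} (hn : 1 ≤ n) {Q : ℝ[X]}
    (hQ : Q.natDegree ≤ n) :
    hermiteMoment α (derivative Q ^ 2) ≤ 2 * n * hermiteMoment α (Q ^ 2) := by
  set β := (α - 1) / 2
  have hβ : -1 / 2 ≤ β := by simp only [β]; linarith
  set u := contract 2 Q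
  set v := contract 2 (divX Q)
  have hu : 4 * (u.natDegree : ℝ) ≤ 2 * n := by
    have : u.natDegree ≤ Q.natDegree / 2 := natDegree_contract_le two_ne_zero Q
    exact_mod_cast (by omega : 4 * u.natDegree ≤ 2 * n)
  have hv : 4 * (v.natDegree : ℝ) + 2 ≤ 2 * n := by
    have : v.natDegree ≤ (divX Q).natDegree / 2 := natDegree_contract_le two_ne_zero (divX Q)
    rw [natDegree_divX_eq_natDegree_tsub_one] at this
    exact_mod_cast (by omega : 4 * v.natDegree + 2 ≤ 2 * n)
  have hsplit := expand_contract_add_X_mul_expand_contract_divX Q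
  have hQ2 : Q ^ 2 = expand ℝ 2 (u ^ 2 + X * v ^ 2) + X * expand ℝ 2 (2 * u * v) := by
    conv_lhs => rw [← hsplit]
    simp only [map_add, map_mul, map_ofNat, map_pow, expand_X]
    ring
  have hQ'2 : derivative Q ^ 2 =
      expand ℝ 2 (C 4 * (X * derivative u ^ 2) + (v + 2 * X * derivative v) ^ 2) +
        X * expand ℝ 2 (4 * derivative u * (v + 2 * X * derivative v)) := by
    conv_lhs => rw [← hsplit]
    simp only [derivative_mul, derivative_X, derivative_expand, map_add, map_mul,
      map_ofNat, map_pow, expand_X, one_mul]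
    ring
  rw [hQ2, hQ'2, hermiteMoment_expand_add_X_mul_expand (by linarith),
    hermiteMoment_expand_add_X_mul_expand (by linarith), laguerreMoment_add (by linarith),
    laguerreMoment_add (by linarith), laguerreMoment_C_mul]
  have heven := mul_le_mul_of_nonneg_right hu (laguerreMoment_sq_nonneg β u)
  have hodd := mul_le_mul_of_nonneg_right hv
    (laguerreMoment_X_mul (γ := β) (v ^ 2) ▸ laguerreMoment_sq_nonneg (β + 1) v)
  have hmarkov := laguerreMoment_X_mul_derivative_sq_le (γ := β) (by linarith) (le_refl u.natDegree)
  have hodd' := laguerreMoment_add_two_X_mul_derivative_sq_le hβ v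
  linarith

end Hermite

lemma sq_L2w_univ_eq_hermiteMoment (α : ℝ) (R : ℝ[X]) :
    L2w univ (fun x => |x| ^ α * Real.exp (-x ^ 2)) R ^ 2 = hermiteMoment α (R ^ 2) := by
  have h : ∫ x in univ, R.eval x ^ 2 * (|x| ^ α * Real.exp (-x ^ 2)) = hermiteMoment α (R ^ 2) := by
    simp only [setIntegral_univ, hermiteMoment, eval_pow]
  rw [L2w, h, Real.sq_sqrt (hermiteMoment_sq_nonneg α R)]

lemma sobNorm_derivative_le {A : Set ℝ} {w : ℝ → ℝ} {k : ℕ} {lam : ℕ → ℝ}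
    (hlam : ∀ j ∈ Finset.Icc 1 k, 0 ≤ lam j) {c : ℝ} (hc : 0 ≤ c) {P : ℝ[X]}
    (hP : ∀ j, L2w A w (derivative^[j + 1] P) ^ 2 ≤ c * L2w A w (derivative^[j] P) ^ 2) :
    sobNorm A w k lam (derivative P) ≤ √c * sobNorm A w k lam P := by
  rw [sobNorm, sobNorm, ← Real.sqrt_mul hc, mul_add, Finset.mul_sum]
  refine Real.sqrt_le_sqrt (add_le_add (hP 0) (Finset.sum_le_sum fun j hj => ?_))
  rw [← Function.iterate_succ_apply, mul_left_comm]
  exact mul_le_mul_of_nonneg_left (hP j) (hlam j hj)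

/-- Markov-type inequality in the generalized Hermite–Sobolev case:
`w(x) = |x|^α e^{-x²}` on `ℝ`, `α ≥ 0`. -/
theorem generalized_hermite_sobolev_markov (α : ℝ) (hα : 0 ≤ α) (n : ℕ) (hn : 1 ≤ n)
    (k : ℕ) (lam : ℕ → ℝ) (hlam : ∀ j ∈ Finset.Icc 1 k, 0 ≤ lam j)
    (P : Polynomial ℝ) (hP : P.natDegree ≤ n) :
    sobNorm Set.univ (fun x => |x| ^ α * Real.exp (-x ^ 2)) k lam (derivative P) ≤
      Real.sqrt (2 * n) *
        sobNorm Set.univ (fun x => |x| ^ α * Real.exp (-x ^ 2)) k lam P := by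
  refine sobNorm_derivative_le hlam (by positivity) fun j => ?_
  rw [sq_L2w_univ_eq_hermiteMoment, sq_L2w_univ_eq_hermiteMoment, Function.iterate_succ_apply']
  exact hermiteMoment_derivative_sq_le hα hn
    ((natDegree_iterate_derivative P j).trans (tsub_le_self.trans hP))
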